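/- arXiv:2103.02001 — 2 statements merged into one kernel-verified Lean document; each statement's English description precedes it below -/
import Mathlib

section
/- Given a two-level (lax-Gray) adjunction (F, U, η, ε, f, u), the derived data satisfies the associativity coherence axiom [Ma]: for every object X of 𝕏, the two composite 2-cells μ_X ∘ T(μ_X) ∘ T²(μ_X) ⟹ μ_X ∘ μ_{TX} ∘ μ_{T²X} agree, namely (a_X ◁ μ_{T²X}) ∙ (μ_X ▷ μ_{μ_X}) ∙ (a_X ◁ T²(μ_X)) = (μ_X ▷ a_{TX}) ∙ (a_X ◁ T(μ_{TX})) ∙ (μ_X ▷ T(a_X)), where μ_{μ_X} : μ_{TX} ∘ T²(μ_X) ⟹ T(μ_X) ∘ μ_{T²X} is the lax-naturality 2-cell of μ at the 1-cell μ_X, T(a_X) = UF(a_X), and a_{TX} = U(ε_{ε_{F T X}}). -/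
open CategoryTheory Bicategory

universe w₁ w₂ w₃ v₁ v₂ v₃ u₁ u₂ u₃

/-- A strict 2-functor between strict bicategories: it preserves identities and
compositions of 1-cells on the nose, is functorial on 2-cells, and is compatible
with whiskering. -/
structure Strict2Functor (B : Type u₁) (C : Type u₂) [Bicategory.{w₁, v₁} B]
    [Bicategory.Strict B] [Bicategory.{w₂, v₂} C] [Bicategory.Strict C] where
  obj : B → C
  map : ∀ {a b : B}, (a ⟶ b) → (obj a ⟶ obj b)
  map₂ : ∀ {a b : B} {f g : a ⟶ b}, (f ⟶ g) → (map f ⟶ map g)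
  map_id : ∀ a : B, map (𝟙 a) = 𝟙 (obj a)
  map_comp : ∀ {a b c : B} (f : a ⟶ b) (g : b ⟶ c), map (f ≫ g) = map f ≫ map g
  map₂_id : ∀ {a b : B} (f : a ⟶ b), map₂ (𝟙 f) = 𝟙 (map f)
  map₂_comp : ∀ {a b : B} {f g h : a ⟶ b} (η : f ⟶ g) (θ : g ⟶ h),
    map₂ (η ≫ θ) = map₂ η ≫ map₂ θ
  map₂_whiskerLeft : ∀ {a b c : B} (f : a ⟶ b) {g h : b ⟶ c} (η : g ⟶ h),
    map₂ (f ◁ η) = eqToHom (map_comp f g) ≫ (map f ◁ map₂ η) ≫ eqToHom (map_comp f h).symm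
  map₂_whiskerRight : ∀ {a b c : B} {f g : a ⟶ b} (η : f ⟶ g) (h : b ⟶ c),
    map₂ (η ▷ h) = eqToHom (map_comp f h) ≫ (map₂ η ▷ map h) ≫ eqToHom (map_comp g h).symm

namespace Strict2Functor

variable {B : Type u₁} {C : Type u₂} {D : Type u₃} [Bicategory.{w₁, v₁} B] [Bicategory.Strict B]
  [Bicategory.{w₂, v₂} C] [Bicategory.Strict C] [Bicategory.{w₃, v₃} D] [Bicategory.Strict D]

lemma map₂_eqToHom (F : Strict2Functor B C) {a b : B} {f g : a ⟶ b} (h : f = g) :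
    F.map₂ (eqToHom h) = eqToHom (congrArg F.map h) := by
  subst h; simp [F.map₂_id]

/-- The identity strict 2-functor. -/
def id (B : Type u₁) [Bicategory.{w₁, v₁} B] [Bicategory.Strict B] : Strict2Functor B B where
  obj a := a
  map f := f
  map₂ η := η
  map_id _ := rfl
  map_comp _ _ := rfl
  map₂_id _ := rfl
  map₂_comp _ _ := rfl
  map₂_whiskerLeft _ _ := by simp
  map₂_whiskerRight _ _ := by simp

/-- Composition of strict 2-functors (diagrammatic order). -/
def comp (F : Strict2Functor B C) (G : Strict2Functor C D) : Strict2Functor B D where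
  obj a := G.obj (F.obj a)
  map f := G.map (F.map f)
  map₂ η := G.map₂ (F.map₂ η)
  map_id a := by (try dsimp only); rw [F.map_id, G.map_id]
  map_comp f g := by (try dsimp only); rw [F.map_comp, G.map_comp]
  map₂_id f := by (try dsimp only); rw [F.map₂_id, G.map₂_id]
  map₂_comp η θ := by (try dsimp only); rw [F.map₂_comp, G.map₂_comp]
  map₂_whiskerLeft := by
    intro a b c f g h η
    try dsimp only
    rw [F.map₂_whiskerLeft, G.map₂_comp, G.map₂_comp, G.map₂_eqToHom, G.map₂_eqToHom,
      G.map₂_whiskerLeft]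
    simp [eqToHom_trans]
  map₂_whiskerRight := by
    intro a b c f g η h
    try dsimp only
    rw [F.map₂_whiskerRight, G.map₂_comp, G.map₂_comp, G.map₂_eqToHom, G.map₂_eqToHom,
      G.map₂_whiskerRight]
    simp [eqToHom_trans]

end Strict2Functor

variable {B : Type u₁} {C : Type u₂} {D : Type u₃} [Bicategory.{w₁, v₁} B] [Bicategory.Strict B]
  [Bicategory.{w₂, v₂} C] [Bicategory.Strict C] [Bicategory.{w₃, v₃} D] [Bicategory.Strict D]

/-- The data of a lax natural transformation: components and naturality 2-cells. -/
structure LaxTransCore (S T : Strict2Functor B C) where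
  app : ∀ a : B, S.obj a ⟶ T.obj a
  naturality : ∀ {a b : B} (g : a ⟶ b), S.map g ≫ app b ⟶ app a ≫ T.map g

/-- A lax natural transformation between strict 2-functors: components `app a`,
naturality 2-cells `naturality g : S g ≫ app b ⟶ app a ≫ T g`, compatible with 2-cells,
with `naturality (𝟙 a)` an identity and `naturality` of a composite given by pasting. -/
structure LaxTrans (S T : Strict2Functor B C) extends LaxTransCore S T where
  naturality_id : ∀ a : B,
    naturality (𝟙 a) = eqToHom (by rw [S.map_id, T.map_id, Category.id_comp, Category.comp_id])
  naturality_comp : ∀ {a b c : B} (g : a ⟶ b) (h : b ⟶ c),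
    naturality (g ≫ h) =
      eqToHom (by rw [S.map_comp, Category.assoc]) ≫
      (S.map g ◁ naturality h) ≫
      eqToHom (by rw [Category.assoc]) ≫
      (naturality g ▷ T.map h) ≫
      eqToHom (by rw [T.map_comp, Category.assoc])
  naturality₂ : ∀ {a b : B} {g g' : a ⟶ b} (ζ : g ⟶ g'),
    (S.map₂ ζ ▷ app b) ≫ naturality g' = naturality g ≫ (app a ◁ T.map₂ ζ)

namespace LaxTransCore

variable {S T R : Strict2Functor B C}

/-- Vertical composite of (the data of) lax natural transformations. -/
def vcomp (φ : LaxTransCore S T) (ψ : LaxTransCore T R) : LaxTransCore S R where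
  app a := φ.app a ≫ ψ.app a
  naturality {a b} g :=
    eqToHom (by rw [Category.assoc]) ≫
    (φ.naturality g ▷ ψ.app b) ≫
    eqToHom (by rw [Category.assoc]) ≫
    (φ.app a ◁ ψ.naturality g) ≫
    eqToHom (by rw [Category.assoc])

/-- Post-whiskering of (the data of) a lax natural transformation with a strict 2-functor:
the transformation `Gφ` with components `G (φ a)`. -/
def post (φ : LaxTransCore S T) (G : Strict2Functor C D) :
    LaxTransCore (S.comp G) (T.comp G) where
  app a := G.map (φ.app a)
  naturality {a b} g :=
    eqToHom (G.map_comp _ _).symm ≫ G.map₂ (φ.naturality g) ≫ eqToHom (G.map_comp _ _)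

/-- Pre-whiskering of (the data of) a lax natural transformation with a strict 2-functor:
the transformation `φG` with components `φ (G a)`. -/
def pre {S T : Strict2Functor C D} (φ : LaxTransCore S T) (G : Strict2Functor B C) :
    LaxTransCore (G.comp S) (G.comp T) where
  app a := φ.app (G.obj a)
  naturality {_ _} g := φ.naturality (G.map g)

/-- The identity lax natural transformation on a strict 2-functor. -/
def id (F : Strict2Functor B C) : LaxTransCore F F where
  app a := 𝟙 (F.obj a)
  naturality {_ _} g := eqToHom (by rw [Category.id_comp, Category.comp_id])

end LaxTransCore

/-- `m` is a modification between (the underlying data of) lax natural transformations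
`σ ⇛ τ` if for every 1-cell `g` the modification square commutes. -/
def IsModification {S T : Strict2Functor B C} (σ τ : LaxTransCore S T)
    (m : ∀ a : B, σ.app a ⟶ τ.app a) : Prop :=
  ∀ {a b : B} (g : a ⟶ b),
    (S.map g ◁ m b) ≫ τ.naturality g = σ.naturality g ≫ (m a ▷ T.map g)

/-- A two-level (lax-Gray) adjunction `(F, U, η, ε, f, u)` between strict 2-categories:
strict 2-functors `F, U`, lax natural transformations `η : Id ⟹ U∘F`, `ε : F∘U ⟹ Id`,
modifications `f : (εF)∘(Fη) ⇛ 1_F` and `u : 1_U ⇛ (Uε)∘(ηU)` satisfying the coherence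
equations `[1_η]` and `[1_ε]`. -/
structure LaxGrayAdjunction (X : Type u₁) (A : Type u₂) [Bicategory.{w₁, v₁} X]
    [Bicategory.Strict X] [Bicategory.{w₂, v₂} A] [Bicategory.Strict A] where
  F : Strict2Functor X A
  U : Strict2Functor A X
  η : LaxTrans (Strict2Functor.id X) (F.comp U)
  ε' : LaxTrans (U.comp F) (Strict2Functor.id A)
  f : ∀ x : X, F.map (η.app x) ≫ ε'.app (F.obj x) ⟶ 𝟙 (F.obj x)
  f_mod : IsModification ((η.toLaxTransCore.post F).vcomp (ε'.toLaxTransCore.pre F))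
    (LaxTransCore.id F) f
  u : ∀ a : A, 𝟙 (U.obj a) ⟶ η.app (U.obj a) ≫ U.map (ε'.app a)
  u_mod : IsModification (LaxTransCore.id U)
    ((η.toLaxTransCore.pre U).vcomp (ε'.toLaxTransCore.post U)) u
  coh_η : ∀ x : X,
    eqToHom (Category.comp_id (η.app x)).symm ≫
    (η.app x ◁ u (F.obj x)) ≫
    eqToHom (Category.assoc _ _ _).symm ≫
    (η.naturality (η.app x) ▷ U.map (ε'.app (F.obj x))) ≫
    eqToHom (Category.assoc _ _ _) ≫
    (η.app x ◁ (eqToHom (U.map_comp _ _).symm ≫ U.map₂ (f x) ≫ eqToHom (U.map_id _))) ≫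
    eqToHom (Category.comp_id (η.app x)) = 𝟙 (η.app x)
  coh_ε' : ∀ a : A,
    eqToHom (Category.id_comp (ε'.app a)).symm ≫
    ((eqToHom (F.map_id _).symm ≫ F.map₂ (u a) ≫ eqToHom (F.map_comp _ _)) ▷ ε'.app a) ≫
    eqToHom (Category.assoc _ _ _) ≫
    (F.map (η.app (U.obj a)) ◁ ε'.naturality (ε'.app a)) ≫
    eqToHom (Category.assoc _ _ _).symm ≫
    (f (U.obj a) ▷ ε'.app a) ≫
    eqToHom (Category.id_comp (ε'.app a)) = 𝟙 (ε'.app a)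

namespace LaxGrayAdjunction

variable {X : Type u₁} {A : Type u₂} [Bicategory.{w₁, v₁} X] [Bicategory.Strict X]
  [Bicategory.{w₂, v₂} A] [Bicategory.Strict A] (adj : LaxGrayAdjunction X A)

/-- The strict 2-endofunctor `T = U ∘ F` of `𝕏` derived from the adjunction. -/
def T : Strict2Functor X X := adj.F.comp adj.U

/-- The lax natural transformation `μ = UεF : T∘T ⟹ T`, with components
`μ_x = U(ε_{Fx})` and naturality cells `μ_g = U(ε_{Fg})`. -/
def μc : LaxTransCore (adj.T.comp adj.T) adj.T :=
  (adj.ε'.toLaxTransCore.pre adj.F).post adj.U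

/-- The 2-cell `a_x = U(ε_{ε_{Fx}}) : μ_x ∘ T(μ_x) ⟹ μ_x ∘ μ_{Tx}`. -/
def aCell (x : X) :
    adj.T.map (adj.μc.app x) ≫ adj.μc.app x ⟶ adj.μc.app (adj.T.obj x) ≫ adj.μc.app x :=
  eqToHom (adj.U.map_comp _ _).symm ≫
    adj.U.map₂ (adj.ε'.naturality (adj.ε'.app (adj.F.obj x))) ≫ eqToHom (adj.U.map_comp _ _)

/-- The 2-cell `p_x = U(f_x) : μ_x ∘ T(η_x) ⟹ 1_{Tx}`. -/
def pCell (x : X) :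
    adj.T.map (adj.η.app x) ≫ adj.μc.app x ⟶ 𝟙 (adj.T.obj x) :=
  eqToHom (adj.U.map_comp _ _).symm ≫ adj.U.map₂ (adj.f x) ≫ eqToHom (adj.U.map_id _)

/-- The 2-cell `q_x = u_{Fx} : 1_{Tx} ⟹ μ_x ∘ η_{Tx}`. -/
def qCell (x : X) : 𝟙 (adj.T.obj x) ⟶ adj.η.app (adj.T.obj x) ≫ adj.μc.app x :=
  adj.u (adj.F.obj x)

/-- `T(a_x) = UF(a_x)`. -/
def TaCell (x : X) :
    adj.T.map (adj.T.map (adj.μc.app x)) ≫ adj.T.map (adj.μc.app x) ⟶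
      adj.T.map (adj.μc.app (adj.T.obj x)) ≫ adj.T.map (adj.μc.app x) :=
  eqToHom (adj.T.map_comp _ _).symm ≫ adj.T.map₂ (adj.aCell x) ≫ eqToHom (adj.T.map_comp _ _)

/-- `T(p_x) = UF(p_x)`. -/
def TpCell (x : X) :
    adj.T.map (adj.T.map (adj.η.app x)) ≫ adj.T.map (adj.μc.app x) ⟶
      𝟙 (adj.T.obj (adj.T.obj x)) :=
  eqToHom (adj.T.map_comp _ _).symm ≫ adj.T.map₂ (adj.pCell x) ≫ eqToHom (adj.T.map_id _)

/-- `T(q_x) = UF(q_x)`. -/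
def TqCell (x : X) :
    𝟙 (adj.T.obj (adj.T.obj x)) ⟶
      adj.T.map (adj.η.app (adj.T.obj x)) ≫ adj.T.map (adj.μc.app x) :=
  eqToHom (adj.T.map_id _).symm ≫ adj.T.map₂ (adj.qCell x) ≫ eqToHom (adj.T.map_comp _ _)

/-- The coherence axiom `[Ma]` at an object `x`. -/
def Ma (x : X) : Prop :=
  (adj.T.map (adj.T.map (adj.μc.app x)) ◁ adj.aCell x) ≫
  eqToHom (Category.assoc _ _ _).symm ≫
  (adj.μc.naturality (adj.μc.app x) ▷ adj.μc.app x) ≫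
  eqToHom (Category.assoc _ _ _) ≫
  (adj.μc.app ((adj.T.comp adj.T).obj x) ◁ adj.aCell x)
  =
  eqToHom (Category.assoc _ _ _).symm ≫
  (adj.TaCell x ▷ adj.μc.app x) ≫
  eqToHom (Category.assoc _ _ _) ≫
  (adj.T.map (adj.μc.app (adj.T.obj x)) ◁ adj.aCell x) ≫
  eqToHom (Category.assoc _ _ _).symm ≫
  (adj.aCell (adj.T.obj x) ▷ adj.μc.app x) ≫
  eqToHom (Category.assoc _ _ _)

/-- The coherence axiom `[Mη]` at an object `x`. -/
def Mη (x : X) : Prop :=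
  eqToHom (Category.comp_id (adj.η.app x)).symm ≫
  (adj.η.app x ◁ adj.qCell x) ≫
  eqToHom (Category.assoc _ _ _).symm ≫
  (adj.η.naturality (adj.η.app x) ▷ adj.μc.app x) ≫
  eqToHom (Category.assoc _ _ _) ≫
  (adj.η.app x ◁ adj.pCell x) ≫
  eqToHom (Category.comp_id (adj.η.app x)) = 𝟙 (adj.η.app x)

/-- The coherence axiom `[Mμ]` at an object `x`. -/
def Mμ (x : X) : Prop :=
  eqToHom (Category.id_comp (adj.μc.app x)).symm ≫
  (adj.TqCell x ▷ adj.μc.app x) ≫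
  eqToHom (Category.assoc _ _ _) ≫
  (adj.T.map (adj.η.app (adj.T.obj x)) ◁ adj.aCell x) ≫
  eqToHom (Category.assoc _ _ _).symm ≫
  (adj.pCell (adj.T.obj x) ▷ adj.μc.app x) ≫
  eqToHom (Category.id_comp (adj.μc.app x)) = 𝟙 (adj.μc.app x)

/-- The coherence axiom `[Mq]` at an object `x`. -/
def Mq (x : X) : Prop :=
  eqToHom (Category.comp_id (adj.μc.app x)).symm ≫
  (adj.μc.app x ◁ adj.qCell x) ≫
  eqToHom (Category.assoc _ _ _).symm ≫
  (adj.η.naturality (adj.μc.app x) ▷ adj.μc.app x) ≫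
  eqToHom (Category.assoc _ _ _) ≫
  (adj.η.app ((adj.T.comp adj.T).obj x) ◁ adj.aCell x)
  =
  eqToHom (Category.id_comp (adj.μc.app x)).symm ≫
  (adj.qCell (adj.T.obj x) ▷ adj.μc.app x) ≫
  eqToHom (Category.assoc _ _ _)

/-- The coherence axiom `[Mp]` at an object `x`. -/
def Mp (x : X) : Prop :=
  (adj.T.map (adj.T.map (adj.η.app x)) ◁ adj.aCell x) ≫
  eqToHom (Category.assoc _ _ _).symm ≫
  (adj.μc.naturality (adj.η.app x) ▷ adj.μc.app x) ≫
  eqToHom (Category.assoc _ _ _) ≫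
  (adj.μc.app x ◁ adj.pCell x) ≫
  eqToHom (Category.comp_id (adj.μc.app x))
  =
  eqToHom (Category.assoc _ _ _).symm ≫
  (adj.TpCell x ▷ adj.μc.app x) ≫
  eqToHom (Category.id_comp (adj.μc.app x))

end LaxGrayAdjunction

/-!
`[Ma]` is the image under `U` of one equation in `𝔸`: the compatibility of the lax
transformation `ε` with the 2-cell `ε_{ε_{FX}}`, in which the naturality cells of the two
composites `FU(ε_{FX}) ≫ ε_{FX}` and `ε_{FUFX} ≫ ε_{FX}` are expanded by the composition law of
`ε`. That equation holds for any lax transformation `σ : S ⟹ T` between strict 2-endofunctors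
and any 1-cell `g`.
-/

namespace Strict2Functor

variable {B : Type u₁} {C : Type u₂} {D : Type u₃} [Bicategory.{w₁, v₁} B] [Bicategory.Strict B]
  [Bicategory.{w₂, v₂} C] [Bicategory.Strict C] [Bicategory.{w₃, v₃} D] [Bicategory.Strict D]

def map₂Comp (F : Strict2Functor B C) {a b b' c : B} {f : a ⟶ b} {g : b ⟶ c} {f' : a ⟶ b'}
    {g' : b' ⟶ c} (α : f ≫ g ⟶ f' ≫ g') : F.map f ≫ F.map g ⟶ F.map f' ≫ F.map g' :=
  eqToHom (F.map_comp f g).symm ≫ F.map₂ α ≫ eqToHom (F.map_comp f' g')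

lemma comp_map₂Comp (F : Strict2Functor B C) (G : Strict2Functor C D) {a b b' c : B}
    {f : a ⟶ b} {g : b ⟶ c} {f' : a ⟶ b'} {g' : b' ⟶ c} (α : f ≫ g ⟶ f' ≫ g') :
    (F.comp G).map₂Comp α = G.map₂Comp (F.map₂Comp α) := by
  simp only [comp, map₂Comp, map₂_comp, map₂_eqToHom, Category.assoc, eqToHom_trans,
    eqToHom_trans_assoc]
  rfl

lemma map_comp₃ (F : Strict2Functor B C) {a b c d : B} (f : a ⟶ b) (g : b ⟶ c) (h : c ⟶ d) :
    F.map (f ≫ g ≫ h) = F.map f ≫ F.map g ≫ F.map h := by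
  rw [F.map_comp, F.map_comp]

end Strict2Functor

namespace LaxTrans

variable {C : Type u₂} {D : Type u₃} [Bicategory.{w₂, v₂} C] [Bicategory.Strict C]
  [Bicategory.{w₃, v₃} D] [Bicategory.Strict D]

theorem naturality_naturality {S T : Strict2Functor C C} (σ : LaxTrans S T) {a b : C}
    (g : a ⟶ b) :
    (S.map (S.map g) ◁ σ.naturality (σ.app b)) ≫ eqToHom (Category.assoc _ _ _).symm ≫
      (σ.naturality (S.map g) ▷ T.map (σ.app b)) ≫ eqToHom (Category.assoc _ _ _) ≫
      (σ.app (S.obj a) ◁ T.map₂Comp (σ.naturality g)) =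
    eqToHom (Category.assoc _ _ _).symm ≫ (S.map₂Comp (σ.naturality g) ▷ σ.app (T.obj b)) ≫
      eqToHom (Category.assoc _ _ _) ≫ (S.map (σ.app a) ◁ σ.naturality (T.map g)) ≫
      eqToHom (Category.assoc _ _ _).symm ≫ (σ.naturality (σ.app a) ▷ T.map (T.map g)) ≫
      eqToHom (Category.assoc _ _ _) := by
  have h := eqToHom (by rw [S.map_comp, Category.assoc]) ≫=
    σ.naturality₂ (σ.naturality g) =≫ eqToHom (by rw [T.map_comp])
  rw [σ.naturality_comp, σ.naturality_comp] at h
  simpa only [Strict2Functor.map₂Comp, whiskerLeft_comp, whiskerLeft_eqToHom, eqToHom_trans_assoc,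
    comp_whiskerRight, eqToHom_whiskerRight, Category.assoc, eqToHom_refl, Category.id_comp,
    eqToHom_trans] using h.symm

theorem map_naturality_naturality_app {S : Strict2Functor C C}
    (σ : LaxTrans S (Strict2Functor.id C)) (U : Strict2Functor C D) (b : C) :
    (U.map (S.map (S.map (σ.app b))) ◁ U.map₂Comp (σ.naturality (σ.app b))) ≫
      eqToHom (Category.assoc _ _ _).symm ≫
      (U.map₂Comp (σ.naturality (S.map (σ.app b))) ▷ U.map (σ.app b)) ≫
      eqToHom (Category.assoc _ _ _) ≫
      (U.map (σ.app (S.obj (S.obj b))) ◁ U.map₂Comp (σ.naturality (σ.app b))) =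
    eqToHom (Category.assoc _ _ _).symm ≫
      (U.map₂Comp (S.map₂Comp (σ.naturality (σ.app b))) ▷ U.map (σ.app b)) ≫
      eqToHom (Category.assoc _ _ _) ≫
      (U.map (S.map (σ.app (S.obj b))) ◁ U.map₂Comp (σ.naturality (σ.app b))) ≫
      eqToHom (Category.assoc _ _ _).symm ≫
      (U.map₂Comp (σ.naturality (σ.app (S.obj b))) ▷ U.map (σ.app b)) ≫
      eqToHom (Category.assoc _ _ _) := by
  have h := eqToHom (U.map_comp₃ _ _ _).symm ≫=
    congrArg U.map₂ (σ.naturality_naturality (σ.app b)) =≫ eqToHom (U.map_comp₃ _ _ _)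
  -- `simp` cannot see through `(Strict2Functor.id C).obj` in the implicit objects.
  unfold Strict2Functor.id at h ⊢
  simpa only [Strict2Functor.map₂_comp, Strict2Functor.map₂_whiskerLeft,
    Strict2Functor.map₂_whiskerRight, Strict2Functor.map₂_eqToHom, Strict2Functor.map₂Comp,
    whiskerLeft_comp, comp_whiskerRight, whiskerLeft_eqToHom, eqToHom_whiskerRight,
    Category.assoc, eqToHom_trans, eqToHom_trans_assoc] using h

end LaxTrans

/-- Given a two-level (lax-Gray) adjunction, the derived data satisfies the
associativity coherence axiom `[Ma]` at every object `x`. -/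
theorem laxGrayAdjunction_Ma {X : Type u₁} {A : Type u₂}
    [Bicategory.{w₁, v₁} X] [Bicategory.Strict X] [Bicategory.{w₂, v₂} A]
    [Bicategory.Strict A] (adj : LaxGrayAdjunction X A) (x : X) : adj.Ma x := by
  -- `aCell`, `TaCell` and the naturality cells of `μc` are `map₂Comp`s by definition.
  have hTa : adj.TaCell x = adj.U.map₂Comp
      ((adj.U.comp adj.F).map₂Comp (adj.ε'.naturality (adj.ε'.app (adj.F.obj x)))) := by
    rw [Strict2Functor.comp_map₂Comp]
    exact Strict2Functor.comp_map₂Comp adj.F adj.U (adj.aCell x)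
  unfold LaxGrayAdjunction.Ma
  rw [hTa]
  exact adj.ε'.map_naturality_naturality_app adj.U (adj.F.obj x)
end

section
/- Let T be a strict 2-endofunctor of a strict 2-category 𝕏 and let μ : T∘T ⟹ T be a lax natural transformation. Then the family of 2-cells μ_{μ_X} : μ_{TX} ∘ T²(μ_X) ⟹ T(μ_X) ∘ μ_{T²X} (the lax-naturality 2-cell of μ at the 1-cell μ_X : T²X → TX), indexed by the objects X of 𝕏, is a modification from the composite lax natural transformation (μT) ∘ (T²μ) to (Tμ) ∘ (μT²), where (μT)_X = μ_{TX}, (T²μ)_X = T²(μ_X), (Tμ)_X = T(μ_X), and (μT²)_X = μ_{T²X}. That is, for every 1-cell g : X → Y, the modification equation holds between μ_{μ_X}, μ_{μ_Y} and the naturality 2-cells of the composite transformations at g. -/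
open CategoryTheory Bicategory

universe w₁ w₂ w₃ v₁ v₂ v₃ u₁ u₂ u₃

variable {B : Type u₁} {C : Type u₂} {D : Type u₃} [Bicategory.{w₁, v₁} B] [Bicategory.Strict B]
  [Bicategory.{w₂, v₂} C] [Bicategory.Strict C] [Bicategory.{w₃, v₃} D] [Bicategory.Strict D]

/-! The square at `g` is the compatibility of `μ` with 2-cells, applied to the 2-cell
`μ_g : T²g ≫ μ_Y ⟹ μ_X ≫ Tg`, once the naturality cells of the composite 1-cells
`T²g ≫ μ_Y` and `μ_X ≫ Tg` are unfolded by the composition law of `μ`. -/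

universe w₀ v₀ u₀

namespace LaxTrans

variable {A : Type u₀} [Bicategory.{w₀, v₀} A] [Bicategory.Strict A]
  {F G : Strict2Functor A B} {S T : Strict2Functor B C}

theorem isModification_naturality_app (φ : LaxTrans S T) (ψ : LaxTransCore F G) :
    IsModification ((ψ.post S).vcomp (φ.pre G)) ((φ.pre F).vcomp (ψ.post T))
      (fun a => φ.naturality (ψ.app a)) := by
  intro a b g
  have key := φ.naturality₂ (ψ.naturality g)
  rw [φ.naturality_comp, φ.naturality_comp] at key
  dsimp only [LaxTransCore.vcomp, LaxTransCore.post, LaxTransCore.pre]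
  -- `delta`, not `dsimp`: `Strict2Functor.comp` also occurs inside the hom-category instances
  delta Strict2Functor.comp
  dsimp only
  simp only [comp_whiskerRight, Bicategory.whiskerLeft_comp, eqToHom_whiskerRight,
    whiskerLeft_eqToHom, Category.assoc, eqToHom_trans_assoc, eqToHom_trans] at key ⊢
  rw [eq_comm, eqToHom_comp_iff] at key
  simp only [← Category.assoc] at key ⊢
  rw [key]
  simp

end LaxTrans

/-- For a strict 2-endofunctor `T` of a strict 2-category `𝕏` and a lax
natural transformation `μ : T ∘ T ⟹ T`, the family of lax-naturality 2-cells
`μ_{μ_x} : μ_{Tx} ∘ T²(μ_x) ⟹ T(μ_x) ∘ μ_{T²x}` is a modification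
`(μT) ∘ (T²μ) ⇛ (Tμ) ∘ (μT²)`. -/
theorem muMu_isModification {X : Type u₁} [Bicategory.{w₁, v₁} X] [Bicategory.Strict X]
    (T : Strict2Functor X X) (μ : LaxTrans (T.comp T) T) :
    IsModification ((μ.toLaxTransCore.post (T.comp T)).vcomp (μ.toLaxTransCore.pre T))
      ((μ.toLaxTransCore.pre (T.comp T)).vcomp (μ.toLaxTransCore.post T))
      (fun x => μ.naturality (μ.app x)) :=
  μ.isModification_naturality_app μ.toLaxTransCore
end
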